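/- arXiv:2512.10970 — 2 statements merged into one kernel-verified Lean document; each statement's English description precedes it below -/
import Mathlib

section
/- Define the total detection error probability P_total(Γ) = P_f(Γ) + P_m(Γ) where P_f(Γ) = P(Δ₁ + σ² ≥ Γ), P_m(Γ) = P(Δ₂ + σ² ≤ Γ), σ² is log-uniform on [x̌, x̂], and x̌ + Δ₂ ≤ x̂ + Δ₁. Then on the interval [x̌ + Δ₂, x̂ + Δ₁], P_total(Γ) = (1/(2 ln ϱ)) ln(ϱ² − ϱ²(Δ₂ − Δ₁)/(Γ − Δ₁)), which is monotonically increasing in Γ. -/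
/-!
The density `1 / (2 y ln ϱ)` on `[σ̃²/ϱ, ϱσ̃²]` has total mass one, so `pdf` leaves no singular
part and determines the law of `σ²`: an event `σ² ∈ [s, t]` inside the support has probability
`ln (t / s) / (2 ln ϱ)`. For `Γ` in the given range, false alarm is `σ² ≥ Γ - Δ₁` and miss is
`σ² ≤ Γ - Δ₂`, both inside the support, so the two logarithms add up to
`ln (ϱ² (Γ - Δ₂) / (Γ - Δ₁)) = ln (ϱ² - ϱ² (Δ₂ - Δ₁) / (Γ - Δ₁))`, increasing in `Γ`.
-/

open MeasureTheory Set

namespace MeasureTheory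

variable {Ω E : Type*} [MeasurableSpace Ω] [MeasurableSpace E] {ℙ : Measure Ω} {μ : Measure E}
  {X : Ω → E} {f : E → ENNReal}

theorem aemeasurable_of_pdf_ae_eq (hpdf : pdf X ℙ μ =ᵐ[μ] f) (hf : ∫⁻ x, f x ∂μ ≠ 0) :
    AEMeasurable X ℙ :=
  aemeasurable_of_pdf_ne_zero X fun h0 ↦ hf <| by
    rw [lintegral_congr_ae (hpdf.symm.trans h0)]
    simp

theorem map_eq_withDensity_of_pdf_ae_eq [IsProbabilityMeasure ℙ] (hpdf : pdf X ℙ μ =ᵐ[μ] f)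
    (hf : ∫⁻ x, f x ∂μ = 1) : ℙ.map X = μ.withDensity f := by
  have : IsProbabilityMeasure (ℙ.map X) :=
    Measure.isProbabilityMeasure_map (aemeasurable_of_pdf_ae_eq hpdf (by simp [hf]))
  have : IsProbabilityMeasure (μ.withDensity f) := ⟨by simp [hf]⟩
  refine (Measure.eq_of_le_of_isProbabilityMeasure ?_).symm
  rw [← withDensity_congr_ae hpdf]
  exact withDensity_pdf_le_map X ℙ μ

end MeasureTheory

theorem setLIntegral_Icc_ofReal_inv {s t : ℝ} (hs : 0 < s) (hst : s ≤ t) :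
    ∫⁻ y in Icc s t, ENNReal.ofReal y⁻¹ = ENNReal.ofReal (Real.log (t / s)) := by
  have hint : IntegrableOn (fun y : ℝ ↦ y⁻¹) (Ioc s t) :=
    ((continuousOn_inv₀.mono fun y hy ↦ (hs.trans_le hy.1).ne').integrableOn_Icc).mono_set
      Ioc_subset_Icc_self
  rw [← setLIntegral_congr Ioc_ae_eq_Icc, ← ofReal_integral_eq_lintegral_ofReal hint,
    ← intervalIntegral.integral_of_le hst, integral_inv_of_pos hs (hs.trans_le hst)]
  filter_upwards [ae_restrict_mem measurableSet_Ioc] with y hy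
  exact inv_nonneg.2 (hs.trans hy.1).le

noncomputable def logUniformDensity (a b : ℝ) : ℝ → ENNReal :=
  (Icc a b).indicator fun y ↦ ENNReal.ofReal (1 / (y * Real.log (b / a)))

section LogUniform

variable {a b s t u v : ℝ} {Ω : Type*} [MeasurableSpace Ω] {ℙ : Measure Ω}
  [IsProbabilityMeasure ℙ] {X : Ω → ℝ}

theorem logUniformDensity_div_mul {ϱ σ : ℝ} (hϱ : ϱ ≠ 0) (hσ : σ ≠ 0) :
    logUniformDensity (σ / ϱ) (ϱ * σ)
      = (Icc (σ / ϱ) (ϱ * σ)).indicator fun y ↦ ENNReal.ofReal (1 / (2 * y * Real.log ϱ)) := by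
  have hratio : ϱ * σ / (σ / ϱ) = ϱ ^ 2 := by field_simp
  simp only [logUniformDensity, hratio, Real.log_pow, Nat.cast_ofNat]
  congr! 3
  ring

theorem withDensity_logUniformDensity_apply (ha : 0 < a) (has : a ≤ s) (hst : s ≤ t)
    (htb : t ≤ b) {S : Set ℝ} (hS : MeasurableSet S) (hSab : S ∩ Icc a b = Icc s t) :
    volume.withDensity (logUniformDensity a b) S
      = ENNReal.ofReal (Real.log (t / s) / Real.log (b / a)) := by
  have hK : 0 ≤ Real.log (b / a) :=
    Real.log_nonneg ((one_le_div ha).2 (has.trans (hst.trans htb)))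
  have hdens : ∀ y, ENNReal.ofReal (1 / (y * Real.log (b / a)))
      = ENNReal.ofReal y⁻¹ * ENNReal.ofReal (Real.log (b / a))⁻¹ :=
    fun y ↦ by rw [one_div, mul_inv, ENNReal.ofReal_mul' (inv_nonneg.2 hK)]
  rw [withDensity_apply _ hS, logUniformDensity, lintegral_indicator measurableSet_Icc,
    Measure.restrict_restrict measurableSet_Icc, inter_comm, hSab]
  simp_rw [hdens]
  rw [lintegral_mul_const _ (by fun_prop), setLIntegral_Icc_ofReal_inv (ha.trans_le has) hst,
    ← ENNReal.ofReal_mul (Real.log_nonneg ((one_le_div (ha.trans_le has)).2 hst)),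
    ← div_eq_mul_inv]

theorem lintegral_logUniformDensity (ha : 0 < a) (hab : a < b) :
    ∫⁻ y, logUniformDensity a b y = 1 := by
  rw [← setLIntegral_univ, ← withDensity_apply _ .univ,
    withDensity_logUniformDensity_apply ha le_rfl hab.le le_rfl .univ (univ_inter _),
    div_self (Real.log_pos ((one_lt_div ha).2 hab)).ne', ENNReal.ofReal_one]

theorem measure_preimage_eq_of_pdf_ae_eq_logUniformDensity
    (hpdf : pdf X ℙ =ᵐ[volume] logUniformDensity a b) (ha : 0 < a) (hab : a < b)
    (has : a ≤ s) (hst : s ≤ t) (htb : t ≤ b) {S : Set ℝ} (hS : MeasurableSet S)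
    (hSab : S ∩ Icc a b = Icc s t) :
    ℙ (X ⁻¹' S) = ENNReal.ofReal (Real.log (t / s) / Real.log (b / a)) := by
  have hmass := lintegral_logUniformDensity ha hab
  rw [← Measure.map_apply_of_aemeasurable
      (aemeasurable_of_pdf_ae_eq hpdf (hmass ▸ one_ne_zero)) hS,
    map_eq_withDensity_of_pdf_ae_eq hpdf hmass,
    withDensity_logUniformDensity_apply ha has hst htb hS hSab]

theorem measure_ge_eq_of_pdf_ae_eq_logUniformDensity
    (hpdf : pdf X ℙ =ᵐ[volume] logUniformDensity a b) (ha : 0 < a) (hab : a < b)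
    (hau : a ≤ u) (hub : u ≤ b) :
    ℙ {ω | u ≤ X ω} = ENNReal.ofReal (Real.log (b / u) / Real.log (b / a)) :=
  measure_preimage_eq_of_pdf_ae_eq_logUniformDensity hpdf ha hab hau hub le_rfl (S := Ici u)
    measurableSet_Ici
    (by rw [← Ici_inter_Iic, ← inter_assoc, Ici_inter_Ici, sup_eq_left.2 hau, Ici_inter_Iic])

theorem measure_le_eq_of_pdf_ae_eq_logUniformDensity
    (hpdf : pdf X ℙ =ᵐ[volume] logUniformDensity a b) (ha : 0 < a) (hab : a < b)
    (hav : a ≤ v) (hvb : v ≤ b) :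
    ℙ {ω | X ω ≤ v} = ENNReal.ofReal (Real.log (v / a) / Real.log (b / a)) :=
  measure_preimage_eq_of_pdf_ae_eq_logUniformDensity hpdf ha hab le_rfl hav hvb (S := Iic v)
    measurableSet_Iic
    (by rw [← Ici_inter_Iic, inter_left_comm, Iic_inter_Iic, inf_eq_left.2 hvb, Ici_inter_Iic])

theorem measure_add_ge_add_measure_add_le_of_pdf_ae_eq_logUniformDensity
    (hpdf : pdf X ℙ =ᵐ[volume] logUniformDensity a b) (ha : 0 < a) (hab : a < b) {δ₁ δ₂ Γ : ℝ}
    (hδ : δ₁ ≤ δ₂) (hΓa : a + δ₂ ≤ Γ) (hΓb : Γ ≤ b + δ₁) :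
    ℙ {ω | δ₁ + X ω ≥ Γ} + ℙ {ω | δ₂ + X ω ≤ Γ}
      = ENNReal.ofReal (Real.log (b / a * (Γ - δ₂) / (Γ - δ₁)) / Real.log (b / a)) := by
  have hu : 0 < Γ - δ₁ := by linarith
  have hv : 0 < Γ - δ₂ := by linarith
  have hfalse : {ω | δ₁ + X ω ≥ Γ} = {ω | Γ - δ₁ ≤ X ω} := by ext; simp [add_comm δ₁]
  have hmiss : {ω | δ₂ + X ω ≤ Γ} = {ω | X ω ≤ Γ - δ₂} := by ext; simp [le_sub_iff_add_le']
  have hK : 0 < Real.log (b / a) := Real.log_pos ((one_lt_div ha).2 hab)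
  rw [hfalse, hmiss,
    measure_ge_eq_of_pdf_ae_eq_logUniformDensity hpdf ha hab (by linarith) (by linarith),
    measure_le_eq_of_pdf_ae_eq_logUniformDensity hpdf ha hab (by linarith) (by linarith),
    ← ENNReal.ofReal_add, ← add_div,
    ← Real.log_mul (div_pos (ha.trans hab) hu).ne' (div_pos hv ha).ne']
  · congr 3
    ring
  all_goals
    refine div_nonneg (Real.log_nonneg ?_) hK.le
    rw [one_le_div (by linarith)]
    linarith

end LogUniform

theorem monotoneOn_const_mul_log_sub_div {c A B d : ℝ} {S : Set ℝ} (hc : 0 ≤ c) (hB : 0 ≤ B)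
    (hS : ∀ x ∈ S, d < x ∧ 0 < A - B / (x - d)) :
    MonotoneOn (fun x ↦ c * Real.log (A - B / (x - d))) S := by
  intro x hx y _ hxy
  obtain ⟨hdx, hpos⟩ := hS x hx
  have : 0 < x - d := sub_pos.2 hdx
  dsimp only
  gcongr

theorem stmt3_general {Ω : Type*} [MeasureSpace Ω] (ℙ : Measure Ω) [IsProbabilityMeasure ℙ]
    (σ2 : Ω → ℝ) (ϱ σt2 Δ₁ Δ₂ : ℝ) (hϱ : 1 < ϱ) (hσ : 0 < σt2)
    (hΔ : Δ₁ < Δ₂)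
    (hpdf : pdf σ2 ℙ volume =ᵐ[volume] fun x =>
      (Icc (σt2 / ϱ) (ϱ * σt2)).indicator
        (fun y => ENNReal.ofReal (1 / (2 * y * Real.log ϱ))) x) :
    (∀ Γ ∈ Icc (σt2 / ϱ + Δ₂) (ϱ * σt2 + Δ₁),
        ℙ {ω | Δ₁ + σ2 ω ≥ Γ} + ℙ {ω | Δ₂ + σ2 ω ≤ Γ}
          = ENNReal.ofReal (1 / (2 * Real.log ϱ)
              * Real.log (ϱ ^ 2 - ϱ ^ 2 * (Δ₂ - Δ₁) / (Γ - Δ₁))))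
    ∧ MonotoneOn (fun Γ => 1 / (2 * Real.log ϱ)
          * Real.log (ϱ ^ 2 - ϱ ^ 2 * (Δ₂ - Δ₁) / (Γ - Δ₁)))
        (Icc (σt2 / ϱ + Δ₂) (ϱ * σt2 + Δ₁)) := by
  have hϱ0 : 0 < ϱ := zero_lt_one.trans hϱ
  have hL : 0 < Real.log ϱ := Real.log_pos hϱ
  have hpdf' : pdf σ2 ℙ =ᵐ[volume] logUniformDensity (σt2 / ϱ) (ϱ * σt2) := by
    rwa [logUniformDensity_div_mul hϱ0.ne' hσ.ne']
  have ha : 0 < σt2 / ϱ := div_pos hσ hϱ0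
  have hba : ϱ * σt2 / (σt2 / ϱ) = ϱ ^ 2 := by field_simp
  have hab : σt2 / ϱ < ϱ * σt2 := by
    rw [← one_lt_div ha, hba]
    exact one_lt_pow₀ hϱ two_ne_zero
  have hform {Γ : ℝ} (hΓ : Δ₁ < Γ) :
      ϱ ^ 2 - ϱ ^ 2 * (Δ₂ - Δ₁) / (Γ - Δ₁) = ϱ ^ 2 * (Γ - Δ₂) / (Γ - Δ₁) := by
    field_simp [(sub_pos.2 hΓ).ne']
    ring
  refine ⟨fun Γ ⟨hΓa, hΓb⟩ ↦ ?_, monotoneOn_const_mul_log_sub_div (by positivity)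
    (mul_nonneg (sq_nonneg ϱ) (sub_nonneg.2 hΔ.le)) fun x ⟨hxa, _⟩ ↦ ?_⟩
  · rw [measure_add_ge_add_measure_add_le_of_pdf_ae_eq_logUniformDensity hpdf' ha hab hΔ.le
      hΓa hΓb, hba, hform (by linarith), Real.log_pow, Nat.cast_ofNat, one_div_mul_eq_div]
  · have hx : Δ₁ < x := by linarith
    have : 0 < x - Δ₂ := by linarith
    exact ⟨hx, by rw [hform hx]; positivity⟩

/-- Total detection error probability on [x̌+Δ₂, x̂+Δ₁]: closed form and monotonicity. -/
theorem stmt3 {Ω : Type*} [MeasureSpace Ω] (ℙ : Measure Ω) [IsProbabilityMeasure ℙ]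
    (σ2 : Ω → ℝ) (ϱ σt2 Δ₁ Δ₂ : ℝ) (hϱ : 1 < ϱ) (hσ : 0 < σt2)
    (hΔ1 : 0 ≤ Δ₁) (hΔ : Δ₁ < Δ₂)
    (hord : σt2 / ϱ + Δ₂ ≤ ϱ * σt2 + Δ₁)
    (hpdf : pdf σ2 ℙ volume =ᵐ[volume] fun x =>
      (Icc (σt2 / ϱ) (ϱ * σt2)).indicator
        (fun y => ENNReal.ofReal (1 / (2 * y * Real.log ϱ))) x) :
    (∀ Γ ∈ Icc (σt2 / ϱ + Δ₂) (ϱ * σt2 + Δ₁),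
        ℙ {ω | Δ₁ + σ2 ω ≥ Γ} + ℙ {ω | Δ₂ + σ2 ω ≤ Γ}
          = ENNReal.ofReal (1 / (2 * Real.log ϱ)
              * Real.log (ϱ ^ 2 - ϱ ^ 2 * (Δ₂ - Δ₁) / (Γ - Δ₁))))
    ∧ MonotoneOn (fun Γ => 1 / (2 * Real.log ϱ)
          * Real.log (ϱ ^ 2 - ϱ ^ 2 * (Δ₂ - Δ₁) / (Γ - Δ₁)))
        (Icc (σt2 / ϱ + Δ₂) (ϱ * σt2 + Δ₁)) :=
  stmt3_general ℙ σ2 ϱ σt2 Δ₁ Δ₂ hϱ hσ hΔ hpdf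
end

section
/- Let ϱ > 1, x̌ = σ̃²/ϱ, x̂ = ϱσ̃², and Δ₂ > Δ₁ ≥ 0 with x̌ + Δ₂ ≤ x̂ + Δ₁. The total detection error probability P_total(Γ), defined piecewise as 1 for Γ < x̌+Δ₁; θ₁ for x̌+Δ₁ ≤ Γ < x̌+Δ₂; θ₁+θ₂ for x̌+Δ₂ ≤ Γ ≤ x̂+Δ₁; θ₂ for x̂+Δ₁ < Γ ≤ x̂+Δ₂; and 1 for Γ > x̂+Δ₂, attains its minimum over all Γ at Γ* = x̌ + Δ₂, and the minimum value is P*_total = (1/(2 ln ϱ)) ln(x̂/(x̌ + Δ₂ − Δ₁)). -/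
open Set

/-- Lemma 1: the piecewise total DEP attains its minimum at Γ* = x̌ + Δ₂,
    with minimum value (1/(2 ln ϱ)) ln(x̂/(x̌ + Δ₂ − Δ₁)). -/
theorem stmt5 (ϱ σt2 Δ₁ Δ₂ : ℝ) (hϱ : 1 < ϱ) (hσ : 0 < σt2)
    (hΔ1 : 0 ≤ Δ₁) (hΔ : Δ₁ < Δ₂)
    (hord : σt2 / ϱ + Δ₂ ≤ ϱ * σt2 + Δ₁)
    (xlo xhi : ℝ) (hxlo : xlo = σt2 / ϱ) (hxhi : xhi = ϱ * σt2)
    (θ₁ θ₂ P : ℝ → ℝ)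
    (hθ₁ : θ₁ = fun Γ => 1 / (2 * Real.log ϱ) * Real.log (xhi / (Γ - Δ₁)))
    (hθ₂ : θ₂ = fun Γ => 1 / (2 * Real.log ϱ) * Real.log (ϱ * (Γ - Δ₂) / σt2))
    (hP : P = fun Γ =>
      if Γ < xlo + Δ₁ then 1
      else if Γ < xlo + Δ₂ then θ₁ Γ
      else if Γ ≤ xhi + Δ₁ then θ₁ Γ + θ₂ Γ
      else if Γ ≤ xhi + Δ₂ then θ₂ Γ
      else 1) :
    (∀ Γ : ℝ, P (xlo + Δ₂) ≤ P Γ)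
    ∧ P (xlo + Δ₂) = 1 / (2 * Real.log ϱ) * Real.log (xhi / (xlo + Δ₂ - Δ₁)) := by
  have hϱ0 : 0 < ϱ := by linarith
  have hL : 0 < Real.log ϱ := Real.log_pos hϱ
  have hc : 0 < 1 / (2 * Real.log ϱ) := by positivity
  have hx1 : ϱ * xlo = σt2 := by rw [hxlo]; field_simp
  have hxlo0 : 0 < xlo := by rw [hxlo]; positivity
  have hxhi0 : 0 < xhi := by rw [hxhi]; positivity
  have hd : 0 < Δ₂ - Δ₁ := by linarith
  have hden : 0 < xlo + Δ₂ - Δ₁ := by linarith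
  have hordx : xlo + Δ₂ ≤ xhi + Δ₁ := by rw [hxlo, hxhi]; exact hord
  set c := 1 / (2 * Real.log ϱ) with hcdef
  -- value at the minimizer
  have hPval : P (xlo + Δ₂) = c * Real.log (xhi / (xlo + Δ₂ - Δ₁)) := by
    rw [hP]
    simp only
    rw [if_neg (by linarith), if_neg (by linarith), if_pos hordx, hθ₁, hθ₂]
    simp only
    have h2 : ϱ * (xlo + Δ₂ - Δ₂) / σt2 = 1 := by
      field_simp
      linarith [hx1]
    rw [h2, Real.log_one, mul_zero, add_zero]
  refine ⟨?_, hPval⟩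
  intro Γ
  rw [hPval, hP]
  simp only
  have hM1 : c * Real.log (xhi / (xlo + Δ₂ - Δ₁)) ≤ 1 := by
    have h1 : xhi / (xlo + Δ₂ - Δ₁) ≤ ϱ ^ 2 := by
      rw [div_le_iff₀ hden]
      nlinarith [hx1, hxhi, mul_pos hϱ0 hd]
    have h2 : Real.log (xhi / (xlo + Δ₂ - Δ₁)) ≤ Real.log (ϱ ^ 2) :=
      Real.log_le_log (by positivity) h1
    have h3 : Real.log (ϱ ^ 2) = 2 * Real.log ϱ := by
      rw [Real.log_pow]; ring
    have h2' : Real.log (xhi / (xlo + Δ₂ - Δ₁)) ≤ 2 * Real.log ϱ := h3 ▸ h2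
    calc c * Real.log (xhi / (xlo + Δ₂ - Δ₁))
        ≤ c * (2 * Real.log ϱ) := mul_le_mul_of_nonneg_left h2' (le_of_lt hc)
      _ = 1 := by rw [hcdef]; field_simp
  split_ifs with h1 h2 h3 h4
  · exact hM1
  · -- branch 2: xlo + Δ₁ ≤ Γ < xlo + Δ₂
    rw [hθ₁]; simp only
    have hΓ1 : xlo ≤ Γ - Δ₁ := by linarith [not_lt.mp h1]
    have : xhi / (xlo + Δ₂ - Δ₁) ≤ xhi / (Γ - Δ₁) := by
      apply div_le_div_of_nonneg_left (le_of_lt hxhi0) (by linarith) (by linarith)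
    exact mul_le_mul_of_nonneg_left (Real.log_le_log (by positivity) this) (le_of_lt hc)
  · -- branch 3: xlo + Δ₂ ≤ Γ ≤ xhi + Δ₁
    rw [hθ₁, hθ₂]; simp only
    have hΓ2 : xlo + Δ₂ ≤ Γ := not_lt.mp h2
    have hA : 0 < xhi / (Γ - Δ₁) := by
      apply div_pos hxhi0; linarith
    have hB : 0 < ϱ * (Γ - Δ₂) / σt2 := by
      apply div_pos (mul_pos hϱ0 (by linarith)) hσ
    rw [← mul_add, ← Real.log_mul (ne_of_gt hA) (ne_of_gt hB)]
    apply mul_le_mul_of_nonneg_left _ (le_of_lt hc)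
    apply Real.log_le_log (by positivity)
    rw [div_mul_div_comm,
      div_le_div_iff₀ hden (mul_pos (by linarith : (0:ℝ) < Γ - Δ₁) hσ), ← hx1]
    nlinarith [mul_nonneg (mul_nonneg (le_of_lt (mul_pos hxhi0 hϱ0)) (le_of_lt hd))
      (by linarith : (0:ℝ) ≤ Γ - Δ₂ - xlo), hx1]
  · -- branch 4: xhi + Δ₁ < Γ ≤ xhi + Δ₂
    rw [hθ₂]; simp only
    have hΓ3 : xhi + Δ₁ < Γ := not_le.mp h3
    apply mul_le_mul_of_nonneg_left _ (le_of_lt hc)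
    apply Real.log_le_log (by positivity)
    rw [div_le_div_iff₀ hden hσ, ← hx1]
    nlinarith [mul_nonneg (le_of_lt (mul_pos hϱ0 hd))
      (by linarith [hordx] : (0:ℝ) ≤ xhi - xlo - (Δ₂ - Δ₁)),
      mul_nonneg (mul_nonneg (le_of_lt hϱ0)
        (by linarith : (0:ℝ) ≤ Γ - Δ₂ - (xhi - (Δ₂ - Δ₁)))) (le_of_lt hden), hx1]
  · exact hM1
end
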